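/- Let Q ∈ ℝ^{l×n}, P ∈ ℝ^{n×T}, R ∈ ℝ^{l×T}, and suppose the affine set Σ = {A ∈ ℝ^{n×n} : R = Q A P} is nonempty. Let v ∈ ℝ^T and λ ∈ ℝ be such that R v = λ Q P v and x₀ := P v ≠ 0. Then there exists A* ∈ Σ with A* x₀ = λ x₀. -/

import Mathlib

open Matrix

/-!
If `A₀ ∈ Σ` and `x₀ = P v`, the hypothesis `R v = λ Q P v` says exactly that the residual
`w = (λ I - A₀) x₀` lies in the kernel of `Q`. Adding to `A₀` the rank-one matrix `w yᵀ`, where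
`yᵀ x₀ = 1` (over `ℝ`, `y = x₀ / ‖x₀‖²`), fixes the eigenvector equation without leaving `Σ`,
because `Q (w yᵀ) P = (Q w) (yᵀ P) = 0`.
-/

namespace Matrix

variable {K k n o : Type*} [Fintype n]

theorem mul_add_vecMulVec_mul_of_mulVec_eq_zero [NonUnitalSemiring K]
    (Q : Matrix k n K) (A : Matrix n n K) (P : Matrix n o K) {w y : n → K} (hw : Q *ᵥ w = 0) :
    Q * (A + vecMulVec w y) * P = Q * A * P := by
  rw [Matrix.mul_add, mul_vecMulVec, hw, zero_vecMulVec, add_zero]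

theorem add_vecMulVec_mulVec_of_dotProduct_eq_one [Semiring K]
    (A : Matrix n n K) (w : n → K) {x y : n → K} (hyx : y ⬝ᵥ x = 1) :
    (A + vecMulVec w y) *ᵥ x = A *ᵥ x + w := by
  rw [add_mulVec, vecMulVec_mulVec, hyx, MulOpposite.op_one, one_smul]

theorem exists_mul_mul_eq_and_mulVec_eq_smul [CommRing K] [Fintype o]
    (Q : Matrix k n K) (A₀ : Matrix n n K) (P : Matrix n o K) {v : o → K} {lam : K}
    (hv : (Q * A₀ * P) *ᵥ v = lam • Q *ᵥ (P *ᵥ v)) {y : n → K} (hy : y ⬝ᵥ (P *ᵥ v) = 1) :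
    ∃ A : Matrix n n K, Q * A * P = Q * A₀ * P ∧ A *ᵥ (P *ᵥ v) = lam • P *ᵥ v := by
  set x := P *ᵥ v
  have hQw : Q *ᵥ (lam • x - A₀ *ᵥ x) = 0 := by
    rw [mulVec_sub, mulVec_smul, ← hv, mulVec_mulVec, mulVec_mulVec, Matrix.mul_assoc, sub_self]
  refine ⟨A₀ + vecMulVec (lam • x - A₀ *ᵥ x) y,
    mul_add_vecMulVec_mul_of_mulVec_eq_zero Q A₀ P hQw, ?_⟩
  rw [add_vecMulVec_mulVec_of_dotProduct_eq_one A₀ _ hy, add_sub_cancel]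

end Matrix

theorem stmt_9 {l n T : ℕ} (Q : Matrix (Fin l) (Fin n) ℝ) (P : Matrix (Fin n) (Fin T) ℝ)
    (R : Matrix (Fin l) (Fin T) ℝ) (hne : ∃ A : Matrix (Fin n) (Fin n) ℝ, R = Q * A * P)
    (v : Fin T → ℝ) (lam : ℝ)
    (hv : R.mulVec v = lam • Q.mulVec (P.mulVec v))
    (hx0 : P.mulVec v ≠ 0) :
    ∃ Astar : Matrix (Fin n) (Fin n) ℝ, R = Q * Astar * P ∧
      Astar.mulVec (P.mulVec v) = lam • P.mulVec v := by
  obtain ⟨A₀, rfl⟩ := hne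
  set x := P *ᵥ v
  have hx : x ⬝ᵥ x ≠ 0 := fun h => hx0 (dotProduct_self_eq_zero.mp h)
  have hy : ((x ⬝ᵥ x)⁻¹ • x) ⬝ᵥ x = 1 := by rw [smul_dotProduct, smul_eq_mul, inv_mul_cancel₀ hx]
  obtain ⟨A, hA, hAx⟩ := exists_mul_mul_eq_and_mulVec_eq_smul Q A₀ P hv hy
  exact ⟨A, hA.symm, hAx⟩
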